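/- Let Q be a quantale, M a Q-module, and (N_i)_{i ∈ I} a nonempty family of multiplicative filters of Q, each normal over M. Then the m-filter ∑_{i ∈ I} N_i := {q ∈ Q : there exist a finite nonempty I₀ ⊆ I and elements s_i ∈ N_i (i ∈ I₀) with ∏_{i ∈ I₀} s_i ≤ q} is normal over M. -/
import Mathlib


universe u v

/-- A (commutative, integral) quantale: a complete lattice with a commutative monoid
structure whose unit is the top element and whose multiplication distributes over
arbitrary suprema. -/
class IntegralQuantale (Q : Type u) extends CompleteLattice Q, CommMonoid Q where
  one_eq_top : (1 : Q) = ⊤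
  mul_sSup : ∀ (a : Q) (S : Set Q), a * sSup S = ⨆ b ∈ S, a * b

/-- A module over a quantale. -/
class QModule (Q : Type u) [IntegralQuantale Q] (M : Type v) extends
    CompleteLattice M, SMul Q M where
  mul_smul' : ∀ (p q : Q) (m : M), (p * q) • m = p • (q • m)
  top_smul' : ∀ m : M, (⊤ : Q) • m = m
  smul_sSup' : ∀ (q : Q) (S : Set M), S.Nonempty → q • sSup S = ⨆ m ∈ S, q • m
  sSup_smul' : ∀ (S : Set Q) (m : M), S.Nonempty → (⨆ q ∈ S, (q : Q)) • m = ⨆ q ∈ S, q • m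

/-- A multiplicative filter of a quantale. -/
def IsMFilter {Q : Type u} [IntegralQuantale Q] (F : Set Q) : Prop :=
  ⊤ ∈ F ∧ (∀ a ∈ F, ∀ b : Q, a ≤ b → b ∈ F) ∧ ∀ a ∈ F, ∀ b ∈ F, a * b ∈ F

/-- `a ≼¹_F b`: `a` is locally less than `b` in one step; witnessed by a nonempty
family of pairs `(aᵢ, sᵢ)` with `sᵢ ∈ F`, `a ≤ ⨆ aᵢ` and `sᵢ • aᵢ ≤ b`. -/
def stepLE {Q : Type u} {M : Type v} [IntegralQuantale Q] [QModule Q M]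
    (F : Set Q) (a b : M) : Prop :=
  ∃ P : Set (M × Q), P.Nonempty ∧ (∀ p ∈ P, p.2 ∈ F) ∧
    (a ≤ ⨆ p ∈ P, Prod.fst p) ∧ ∀ p ∈ P, p.2 • p.1 ≤ b

/-- `a ≼ⁿ_F b`: locally less than in `n` steps. -/
def nStepLE {Q : Type u} {M : Type v} [IntegralQuantale Q] [QModule Q M]
    (F : Set Q) : ℕ → M → M → Prop
  | 0, a, b => a = b
  | n + 1, a, b => ∃ c : M, stepLE F a c ∧ nStepLE F n c b

/-- `a ≼_F b`: locally less than (in some positive number of steps). -/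
def localLE {Q : Type u} {M : Type v} [IntegralQuantale Q] [QModule Q M]
    (F : Set Q) (a b : M) : Prop :=
  ∃ n : ℕ, 1 ≤ n ∧ nStepLE F n a b

/-- A complete lattice is shrinkable if every inequality `x ≤ ⨆ xᵢ` can be shrunk
to an equality `x = ⨆ yⱼ` with each `yⱼ` below a finite subsupremum of the `xᵢ`. -/
def Shrinkable (L : Type u) [CompleteLattice L] : Prop :=
  ∀ (x : L) (S : Set L), S.Nonempty → x ≤ sSup S →
    ∃ Y : Set L, Y.Nonempty ∧ x = sSup Y ∧
      ∀ y ∈ Y, ∃ T : Finset L, T.Nonempty ∧ ↑T ⊆ S ∧ y ≤ T.sup id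

/-- An m-filter `N` is normal over `M`: whenever `s ∈ N` and `s • m ≤ ⨆ S` for a
nonempty `S ⊆ M`, there is a nonempty family of pairs `(m´ⱼ, sⱼ)` with `sⱼ ∈ N`,
`m ≤ ⨆ m´ⱼ`, and each `sⱼ • m´ⱼ` below a finite subsupremum of `S`. -/
def IsNormalOver {Q : Type u} [IntegralQuantale Q] (M : Type v) [QModule Q M]
    (N : Set Q) : Prop :=
  ∀ s ∈ N, ∀ m : M, ∀ S : Set M, S.Nonempty → s • m ≤ sSup S →
    ∃ P : Set (M × Q), P.Nonempty ∧ (m ≤ ⨆ p ∈ P, Prod.fst p) ∧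
      ∀ p ∈ P, p.2 ∈ N ∧
        ∃ S₀ : Finset M, S₀.Nonempty ∧ ↑S₀ ⊆ S ∧ p.2 • p.1 ≤ S₀.sup id

/-- The sum of a family of m-filters: all `q` above a finite nonempty product of
elements, one from each of finitely many members of the family. -/
def familyFilterSum {Q : Type u} [IntegralQuantale Q] {ι : Type u}
    (N : ι → Set Q) : Set Q :=
  {q : Q | ∃ I₀ : Finset ι, I₀.Nonempty ∧
    ∃ s : ι → Q, (∀ i ∈ I₀, s i ∈ N i) ∧ I₀.prod s ≤ q}

section helpers
variable {Q : Type u} [IntegralQuantale Q]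

lemma IQ.mul_le_mul_left (c : Q) {a b : Q} (h : a ≤ b) : c * a ≤ c * b := by
  have h1 := IntegralQuantale.mul_sSup c ({a, b} : Set Q)
  have h2 : sSup ({a, b} : Set Q) = b := by
    rw [sSup_pair]; exact sup_eq_right.mpr h
  have h3 : c * a ≤ ⨆ x ∈ ({a, b} : Set Q), c * x :=
    le_biSup _ (by simp : a ∈ ({a, b} : Set Q))
  rw [← h1, h2] at h3; exact h3

lemma IQ.mul_le_left (a b : Q) : a * b ≤ a := by
  have := IQ.mul_le_mul_left a (le_top : b ≤ ⊤)
  rwa [← IntegralQuantale.one_eq_top, mul_one] at this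

lemma IQ.mul_le_mul {a b c d : Q} (h1 : a ≤ b) (h2 : c ≤ d) : a * c ≤ b * d := by
  calc a * c ≤ a * d := IQ.mul_le_mul_left a h2
    _ = d * a := mul_comm _ _
    _ ≤ d * b := IQ.mul_le_mul_left d h1
    _ = b * d := mul_comm _ _

lemma IQ.prod_le {α : Type*} (I : Finset α) (s : α → Q) {i : α} (hi : i ∈ I) :
    I.prod s ≤ s i := by
  classical
  rw [← Finset.mul_prod_erase I s hi]
  exact IQ.mul_le_left _ _

variable {M : Type v} [QModule Q M]

lemma IQ.smul_mono_right (q : Q) {m m' : M} (h : m ≤ m') : q • m ≤ q • m' := by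
  have h1 := QModule.smul_sSup' q ({m, m'} : Set M) ⟨m, by simp⟩
  have h2 : sSup ({m, m'} : Set M) = m' := by
    rw [sSup_pair]; exact sup_eq_right.mpr h
  have h3 : q • m ≤ ⨆ x ∈ ({m, m'} : Set M), q • x :=
    le_biSup _ (by simp : m ∈ ({m, m'} : Set M))
  rw [← h1, h2] at h3; exact h3

lemma IQ.smul_mono_left {p q : Q} (h : p ≤ q) (m : M) : p • m ≤ q • m := by
  have h1 := QModule.sSup_smul' ({p, q} : Set Q) m ⟨p, by simp⟩
  have h2 : (⨆ x ∈ ({p, q} : Set Q), x) = q := by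
    rw [← sSup_eq_iSup, sSup_pair]; exact sup_eq_right.mpr h
  have h3 : p • m ≤ ⨆ x ∈ ({p, q} : Set Q), x • m :=
    le_biSup (fun x : Q => x • m) (by simp : p ∈ ({p, q} : Set Q))
  rw [← h1, h2] at h3; exact h3

-- a finite product of elements of an m-filter is in the filter
lemma IQ.prod_mem {α : Type*} {F : Set Q} (hF : IsMFilter F) (I : Finset α) (s : α → Q)
    (hs : ∀ i ∈ I, s i ∈ F) : I.prod s ∈ F := by
  refine Finset.prod_induction s (· ∈ F) (fun a b ha hb => hF.2.2 a ha b hb) ?_ hs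
  rw [IntegralQuantale.one_eq_top]; exact hF.1

variable {ι : Type u} [Nonempty ι] {N : ι → Set Q}

lemma IQ.subset_sum (hN : ∀ i, IsMFilter (N i)) (i : ι) : N i ⊆ familyFilterSum N := by
  intro q hq
  exact ⟨{i}, ⟨i, by simp⟩, fun _ => q, fun j hj => by simpa [Finset.mem_singleton.mp hj],
    by simp⟩

lemma IQ.sum_filter (hN : ∀ i, IsMFilter (N i)) : IsMFilter (familyFilterSum N) := by
  classical
  refine ⟨?_, ?_, ?_⟩
  · exact IQ.subset_sum hN (Classical.arbitrary ι) (hN _).1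
  · rintro a ⟨I₀, hI₀, s, hs, hle⟩ b hab
    exact ⟨I₀, hI₀, s, hs, hle.trans hab⟩
  · rintro a ⟨I₀, hI₀, s, hs, hsle⟩ b ⟨I₁, hI₁, t, ht, htle⟩
    refine ⟨I₀ ∪ I₁, hI₀.mono Finset.subset_union_left,
      fun i => (if i ∈ I₀ then s i else 1) * (if i ∈ I₁ then t i else 1), ?_, ?_⟩
    · intro i hi
      rcases Finset.mem_union.mp hi with hi0 | hi1
      · by_cases h1 : i ∈ I₁
        · simpa [hi0, h1] using (hN i).2.2 _ (hs i hi0) _ (ht i h1)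
        · simpa [hi0, h1] using hs i hi0
      · by_cases h0 : i ∈ I₀
        · simpa [h0, hi1] using (hN i).2.2 _ (hs i h0) _ (ht i hi1)
        · have : (1 : Q) * t i ∈ N i := by
            rw [one_mul]; exact ht i hi1
          simpa [h0, hi1] using this
    · rw [Finset.prod_mul_distrib, Finset.prod_ite_mem, Finset.prod_ite_mem,
        Finset.union_inter_cancel_left, Finset.union_inter_cancel_right]
      exact IQ.mul_le_mul hsle htle

/-- Key inductive lemma: normality for products over finite nonempty index sets. -/
lemma IQ.key (hN : ∀ i, IsMFilter (N i)) (hnorm : ∀ i, IsNormalOver M (N i)) :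
    ∀ (I₀ : Finset ι), I₀.Nonempty → ∀ (s : ι → Q), (∀ i ∈ I₀, s i ∈ N i) →
    ∀ m : M, ∀ S : Set M, S.Nonempty → (I₀.prod s) • m ≤ sSup S →
    ∃ P : Set (M × Q), P.Nonempty ∧ (m ≤ ⨆ p ∈ P, Prod.fst p) ∧
      ∀ p ∈ P, p.2 ∈ familyFilterSum N ∧
        ∃ S₀ : Finset M, S₀.Nonempty ∧ ↑S₀ ⊆ S ∧ p.2 • p.1 ≤ S₀.sup id := by
  classical
  intro I₀ hne
  induction hne using Finset.Nonempty.cons_induction with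
  | singleton i =>
    intro s hs m S hS hle
    rw [Finset.prod_singleton] at hle
    obtain ⟨P, hPne, hmle, hP⟩ := hnorm i (s i) (hs i (by simp)) m S hS hle
    exact ⟨P, hPne, hmle, fun p hp => ⟨IQ.subset_sum hN i (hP p hp).1, (hP p hp).2⟩⟩
  | cons a I₁ ha hI₁ IH =>
    intro s hs m S hS hle
    rw [Finset.prod_cons, QModule.mul_smul'] at hle
    -- apply normality of N a
    obtain ⟨P₁, hP₁ne, hm1, hP₁⟩ := hnorm a (s a) (hs a (Finset.mem_cons_self a I₁))
      ((I₁.prod s) • m) S hS hle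
    -- the set of first components
    set S' : Set M := Prod.fst '' P₁ with hS'
    have hS'ne : S'.Nonempty := hP₁ne.image _
    have hm1' : (I₁.prod s) • m ≤ sSup S' := by
      rw [hS', sSup_image]; exact hm1
    obtain ⟨P₂, hP₂ne, hm2, hP₂⟩ := IH s (fun i hi => hs i (Finset.mem_cons_of_mem hi))
      m S' hS'ne hm1'
    -- choice functions
    have hfex : ∀ t : M, ∃ p : M × Q, t ∈ S' → p ∈ P₁ ∧ p.1 = t := by
      intro t
      by_cases h : t ∈ S'
      · obtain ⟨p, hp, hpt⟩ := h
        exact ⟨p, fun _ => ⟨hp, hpt⟩⟩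
      · exact ⟨hP₁ne.some, fun ht => absurd ht h⟩
    choose f hf using hfex
    have hS₀ex : ∀ p : M × Q, ∃ S₀ : Finset M,
        p ∈ P₁ → S₀.Nonempty ∧ ↑S₀ ⊆ S ∧ p.2 • p.1 ≤ S₀.sup id := by
      intro p
      by_cases h : p ∈ P₁
      · obtain ⟨S₀, h1, h2, h3⟩ := (hP₁ p h).2
        exact ⟨S₀, fun _ => ⟨h1, h2, h3⟩⟩
      · exact ⟨∅, fun hp => absurd hp h⟩
    choose S₀ hS₀ using hS₀ex
    have hTex : ∀ q : M × Q, ∃ T : Finset M,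
        q ∈ P₂ → T.Nonempty ∧ ↑T ⊆ S' ∧ q.2 • q.1 ≤ T.sup id := by
      intro q
      by_cases h : q ∈ P₂
      · obtain ⟨T, h1, h2, h3⟩ := (hP₂ q h).2
        exact ⟨T, fun _ => ⟨h1, h2, h3⟩⟩
      · exact ⟨∅, fun hq => absurd hq h⟩
    choose T hT using hTex
    -- the new family
    set g : M × Q → M × Q := fun q => (q.1, ((T q).prod fun t => (f t).2) * q.2) with hg
    refine ⟨g '' P₂, hP₂ne.image g, ?_, ?_⟩
    · rw [iSup_image]
      exact hm2
    · rintro p ⟨q, hq, rfl⟩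
      obtain ⟨hTne, hTsub, hTle⟩ := hT q hq
      have hfmem : ∀ t ∈ T q, (f t) ∈ P₁ ∧ (f t).1 = t := fun t ht => hf t (hTsub ht)
      set r : Q := (T q).prod fun t => (f t).2 with hr
      constructor
      · -- membership in the sum
        have hr_mem : r ∈ N a := by
          rw [hr]
          exact IQ.prod_mem (hN a) (T q) (fun t => (f t).2) (fun t ht => ((hP₁ _ (hfmem t ht).1).1))
        exact (IQ.sum_filter hN).2.2 r (IQ.subset_sum hN a hr_mem) q.2 (hP₂ q hq).1
      · -- the finite subsupremum bound
        refine ⟨(T q).biUnion (fun t => S₀ (f t)), ?_, ?_, ?_⟩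
        · obtain ⟨t, ht⟩ := hTne
          obtain ⟨x, hx⟩ := (hS₀ (f t) (hfmem t ht).1).1
          exact ⟨x, Finset.mem_biUnion.mpr ⟨t, ht, hx⟩⟩
        · intro x hx
          obtain ⟨t, ht, hxt⟩ := Finset.mem_biUnion.mp (Finset.mem_coe.mp hx)
          exact (hS₀ (f t) (hfmem t ht).1).2.1 hxt
        · have h1 : (r * q.2) • q.1 = r • (q.2 • q.1) := QModule.mul_smul' _ _ _
          have h2 : r • (q.2 • q.1) ≤ r • ((T q).sup id) := IQ.smul_mono_right r hTle
          have h3 : (T q).sup id = sSup (↑(T q) : Set M) := Finset.sup_id_eq_sSup _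
          have h4 : r • sSup (↑(T q) : Set M) = ⨆ t ∈ (↑(T q) : Set M), r • t :=
            QModule.smul_sSup' r _ (by exact_mod_cast hTne.to_set)
          have h5 : ∀ t ∈ (↑(T q) : Set M), r • t ≤
              ((T q).biUnion (fun t => S₀ (f t))).sup id := by
            intro t ht
            have ht' : t ∈ T q := Finset.mem_coe.mp ht
            have hrle : r ≤ (f t).2 := by
              rw [hr]; exact IQ.prod_le (T q) (fun t => (f t).2) ht'
            calc r • t ≤ (f t).2 • t := IQ.smul_mono_left hrle t
              _ = (f t).2 • (f t).1 := by rw [(hfmem t ht').2]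
              _ ≤ (S₀ (f t)).sup id := (hS₀ (f t) (hfmem t ht').1).2.2
              _ ≤ ((T q).biUnion (fun t => S₀ (f t))).sup id :=
                  Finset.sup_mono (Finset.subset_biUnion_of_mem (fun t => S₀ (f t)) ht')
          calc (r * q.2) • q.1 = r • (q.2 • q.1) := h1
            _ ≤ r • ((T q).sup id) := h2
            _ = ⨆ t ∈ (↑(T q) : Set M), r • t := by rw [h3, h4]
            _ ≤ _ := iSup₂_le h5

/-- Normal filters are preserved under arbitrary (nonempty) sums. -/
theorem familyFilterSum_normal {Q : Type u} {M : Type v}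
    [IntegralQuantale Q] [QModule Q M] {ι : Type u} [Nonempty ι]
    (N : ι → Set Q) (hN : ∀ i, IsMFilter (N i))
    (hnorm : ∀ i, IsNormalOver M (N i)) :
    IsMFilter (familyFilterSum N) ∧ IsNormalOver M (familyFilterSum N) := by
  refine ⟨IQ.sum_filter hN, ?_⟩
  rintro q ⟨I₀, hI₀, s, hs, hle⟩ m S hS hqm
  have h1 : (I₀.prod s) • m ≤ sSup S := le_trans (IQ.smul_mono_left hle m) hqm
  exact IQ.key hN hnorm I₀ hI₀ s hs m S hS h1
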